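/- Let ζ be a smooth compactly supported function on ℝ² × (ℝ∖{0}). Suppose there exist C > 0 and σ > 0 such that for all Schwartz functions f₁, f₂, f₃ on ℝ², |Λ(f₁,f₂,f₃)| ≤ C ‖f₁‖_{H^{(0,−σ)}} ‖f₂‖_{H^{(−σ,0)}} ‖f₃‖_{L^∞}. Then Λ(f₁,f₂,f₃) = 0 for all Schwartz f₁, f₂, f₃. (In particular, no such reversed smoothing inequality can hold unless Λ vanishes identically.) -/

import Mathlib

open MeasureTheory
open scoped ENNReal

noncomputable section

open Complex Filter
open scoped FourierTransform RealInnerProductSpace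

/-- The trilinear form `Λ(f₁,f₂,f₃) = ∫ f₁(x+t,y) f₂(x,y+t²) f₃(x,y) ζ(x,y,t) dx dy dt`. -/
def trilinearForm (ζ : ℝ × ℝ × ℝ → ℂ) (f₁ f₂ f₃ : ℝ × ℝ → ℂ) : ℂ :=
  ∫ p : ℝ × ℝ × ℝ,
    f₁ (p.1 + p.2.2, p.2.1) * f₂ (p.1, p.2.1 + p.2.2 ^ 2) * f₃ (p.1, p.2.1) * ζ p

/-- The Fourier transform on `ℝ²` with convention `f̂(ξ) = ∫ f(x) e^{-2πi x·ξ} dx`. -/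
def ft2 (f : ℝ × ℝ → ℂ) (ξ : ℝ × ℝ) : ℂ :=
  ∫ x : ℝ × ℝ,
    Complex.exp (-(2 * Real.pi * Complex.I) * ((x.1 * ξ.1 + x.2 * ξ.2 : ℝ) : ℂ)) * f x

/-- The anisotropic Sobolev norm
`‖f‖_{H^{(a,b)}} = (∫ |f̂(ξ₁,ξ₂)|² (1+|ξ₁|²)^{a/2} (1+|ξ₂|²)^{b/2} dξ)^{1/2}`. -/
def anisoSobolevNorm (a b : ℝ) (f : ℝ × ℝ → ℂ) : ℝ :=
  (∫ ξ : ℝ × ℝ,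
      ‖ft2 f ξ‖ ^ 2 * (1 + |ξ.1| ^ 2) ^ (a / 2) * (1 + |ξ.2| ^ 2) ^ (b / 2)) ^ (1 / 2 : ℝ)



lemma expL_bound (L : (ℝ × ℝ) →L[ℝ] ℂ) (hL : ∀ x, (L x).re = 0) :
    ∀ (n : ℕ) (x : ℝ × ℝ),
      ‖iteratedFDeriv ℝ n (fun x : ℝ × ℝ => Complex.exp (L x)) x‖ ≤ ‖L‖ ^ n := by
  have hcd : ContDiff ℝ (⊤ : ℕ∞) (fun x : ℝ × ℝ => Complex.exp (L x)) :=
    Complex.contDiff_exp.comp L.contDiff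
  intro n
  induction n with
  | zero =>
    intro x
    simp only [norm_iteratedFDeriv_zero, pow_zero, Complex.norm_exp, hL x,
      Real.exp_zero, le_refl]
  | succ n ih =>
    intro x
    rw [← norm_iteratedFDeriv_fderiv]
    let T : ℂ →L[ℝ] ((ℝ × ℝ) →L[ℝ] ℂ) :=
      (ContinuousLinearMap.lsmul ℝ ℂ :
        ℂ →L[ℝ] ((ℝ × ℝ) →L[ℝ] ℂ) →L[ℝ] ((ℝ × ℝ) →L[ℝ] ℂ)).flip L
    have hT : ∀ c : ℂ, T c = c • L := fun c => rfl
    have hTnorm : ‖T‖ ≤ ‖L‖ := by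
      apply ContinuousLinearMap.opNorm_le_bound _ (norm_nonneg L)
      intro c
      rw [hT, norm_smul c L, mul_comm]
    have hfd : fderiv ℝ (fun x : ℝ × ℝ => Complex.exp (L x)) =
        ⇑T ∘ (fun x : ℝ × ℝ => Complex.exp (L x)) := by
      funext y
      rw [Function.comp_apply, hT]
      exact ((Complex.hasDerivAt_exp (L y)).comp_hasFDerivAt y (L.hasFDerivAt)).fderiv
    rw [hfd, T.iteratedFDeriv_comp_left hcd.contDiffAt ((mod_cast le_top))]
    calc ‖T.compContinuousMultilinearMap
          (iteratedFDeriv ℝ n (fun x : ℝ × ℝ => Complex.exp (L x)) x)‖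
        ≤ ‖T‖ * ‖iteratedFDeriv ℝ n (fun x : ℝ × ℝ => Complex.exp (L x)) x‖ :=
          T.norm_compContinuousMultilinearMap_le _
      _ ≤ ‖L‖ * ‖L‖ ^ n :=
          mul_le_mul hTnorm (ih x) (norm_nonneg _) (norm_nonneg _)
      _ = ‖L‖ ^ (n + 1) := (pow_succ' _ _).symm

lemma expL_tg (L : (ℝ × ℝ) →L[ℝ] ℂ) (hL : ∀ x, (L x).re = 0) :
    Function.HasTemperateGrowth (fun x : ℝ × ℝ => Complex.exp (L x)) := by
  refine ⟨Complex.contDiff_exp.comp L.contDiff, fun n => ⟨0, ‖L‖ ^ n, fun x => ?_⟩⟩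
  simpa using expL_bound L hL n x

open Real in
def charL (η : ℝ) : (ℝ × ℝ) →L[ℝ] ℂ :=
  (2 * π * η) • (Complex.I • (Complex.ofRealCLM.comp (ContinuousLinearMap.snd ℝ ℝ ℝ)))

open Real in
lemma charL_apply (η : ℝ) (x : ℝ × ℝ) :
    charL η x = Complex.I * (2 * π * η * x.2 : ℝ) := by
  simp [charL, Complex.real_smul]
  push_cast
  ring

lemma charL_re (η : ℝ) (x : ℝ × ℝ) : (charL η x).re = 0 := by
  rw [charL_apply]
  simp

def modS (η : ℝ) : SchwartzMap (ℝ × ℝ) ℂ →L[ℝ] SchwartzMap (ℝ × ℝ) ℂ :=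
  SchwartzMap.bilinLeftCLM (ContinuousLinearMap.mul ℝ ℂ) (expL_tg (charL η) (charL_re η))

lemma modS_apply (η : ℝ) (f : SchwartzMap (ℝ × ℝ) ℂ) (x : ℝ × ℝ) :
    (modS η f) x = f x * Complex.exp (charL η x) := rfl

open Real in
lemma tri_inv (ζ : ℝ × ℝ × ℝ → ℂ) (f₁ f₂ f₃ : SchwartzMap (ℝ × ℝ) ℂ) (η : ℝ) :
    trilinearForm ζ ⇑(modS η f₁) ⇑f₂ ⇑(modS (-η) f₃) = trilinearForm ζ ⇑f₁ ⇑f₂ ⇑f₃ := by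
  unfold trilinearForm
  apply integral_congr_ae
  filter_upwards with p
  simp only [modS_apply, charL_apply]
  have h : Complex.exp (Complex.I * ((2 * π * η * p.2.1 : ℝ) : ℂ)) *
      Complex.exp (Complex.I * ((2 * π * (-η) * p.2.1 : ℝ) : ℂ)) = 1 := by
    rw [← Complex.exp_add, show Complex.I * ((2 * π * η * p.2.1 : ℝ) : ℂ) +
      Complex.I * ((2 * π * (-η) * p.2.1 : ℝ) : ℂ) = 0 by push_cast; ring, Complex.exp_zero]
  linear_combination (f₁ (p.1 + p.2.2, p.2.1) * f₂ (p.1, p.2.1 + p.2.2 ^ 2) *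
    f₃ (p.1, p.2.1) * ζ p) * h

open Real in
lemma ft2_modS (f : SchwartzMap (ℝ × ℝ) ℂ) (η : ℝ) (ξ : ℝ × ℝ) :
    ft2 (⇑(modS η f)) ξ = ft2 (⇑f) (ξ.1, ξ.2 - η) := by
  unfold ft2
  apply integral_congr_ae
  filter_upwards with x
  simp only [modS_apply, charL_apply]
  rw [show -(2 * (π : ℂ) * Complex.I) * ((x.1 * ξ.1 + x.2 * (ξ.2 - η) : ℝ) : ℂ) =
      -(2 * (π : ℂ) * Complex.I) * ((x.1 * ξ.1 + x.2 * ξ.2 : ℝ) : ℂ) +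
      Complex.I * ((2 * π * η * x.2 : ℝ) : ℂ) by push_cast; ring, Complex.exp_add]
  ring

abbrev E2 := EuclideanSpace ℝ (Fin 2)

def gE : E2 ≃L[ℝ] ℝ × ℝ :=
  (EuclideanSpace.equiv (Fin 2) ℝ).trans (ContinuousLinearEquiv.finTwoArrow ℝ ℝ)

def mE : E2 ≃ᵐ ℝ × ℝ :=
  (MeasurableEquiv.toLp 2 (Fin 2 → ℝ)).symm.trans MeasurableEquiv.finTwoArrow

lemma mE_mp : MeasurePreserving mE :=
  (volume_preserving_finTwoArrow ℝ).comp (EuclideanSpace.volume_preserving_symm_measurableEquiv_toLp (Fin 2))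

lemma mE_coe : ⇑mE = ⇑gE := rfl

lemma gE_symm_0 (ξ : ℝ × ℝ) : (gE.symm ξ) 0 = ξ.1 := rfl
lemma gE_symm_1 (ξ : ℝ × ℝ) : (gE.symm ξ) 1 = ξ.2 := rfl

def toE2 (f : SchwartzMap (ℝ × ℝ) ℂ) : SchwartzMap E2 ℂ :=
  SchwartzMap.compCLMOfContinuousLinearEquiv ℝ gE f

lemma ft2_eq (f : SchwartzMap (ℝ × ℝ) ℂ) (ξ : ℝ × ℝ) :
    ft2 ⇑f ξ = 𝓕 (⇑(toE2 f)) (gE.symm ξ) := by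
  set F : ℝ × ℝ → ℂ := fun x => Complex.exp (-(2 * Real.pi * Complex.I) *
        ((x.1 * ξ.1 + x.2 * ξ.2 : ℝ) : ℂ)) * f x with hF
  have this : ∀ v : E2, (Real.fourierChar (-(inner ℝ v (gE.symm ξ) : ℝ)) : Circle) • ((toE2 f) v) =
      F (mE v) := by
    intro v
    have hinner : (inner ℝ v (gE.symm ξ) : ℝ) = (mE v).1 * ξ.1 + (mE v).2 * ξ.2 := by
      simp [PiLp.inner_apply, Fin.sum_univ_two, RCLike.inner_apply, gE_symm_0, gE_symm_1]
      show _ = (v 0) * ξ.1 + (v 1) * ξ.2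
      ring
    rw [Circle.smul_def, Real.fourierChar_apply, hinner]
    have h2 : (toE2 f) v = f (mE v) := rfl
    rw [h2, hF]
    congr 1
    push_cast
    ring
  calc ft2 ⇑f ξ = ∫ x : ℝ × ℝ, F x := rfl
    _ = ∫ v : E2, F (mE v) := (mE_mp.integral_comp mE.measurableEmbedding F).symm
    _ = 𝓕 (⇑(toE2 f)) (gE.symm ξ) := by
        rw [Real.fourier_eq]
        exact integral_congr_ae (Filter.Eventually.of_forall fun v => (this v).symm)

def ftS (f : SchwartzMap (ℝ × ℝ) ℂ) : SchwartzMap E2 ℂ :=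
  SchwartzMap.fourierTransformCLM ℂ (toE2 f)

lemma ft2_eq' (f : SchwartzMap (ℝ × ℝ) ℂ) (ξ : ℝ × ℝ) :
    ft2 ⇑f ξ = (ftS f) (gE.symm ξ) := by
  rw [ft2_eq, ftS, SchwartzMap.fourierTransformCLM_apply, SchwartzMap.fourier_coe]

lemma ft2_continuous (f : SchwartzMap (ℝ × ℝ) ℂ) : Continuous (ft2 ⇑f) := by
  have : ft2 ⇑f = fun ξ => (ftS f) (gE.symm ξ) := funext (ft2_eq' f)
  rw [this]
  exact (ftS f).continuous.comp gE.symm.continuous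

lemma normsq_integrable_E2 (g : SchwartzMap E2 ℂ) :
    Integrable (fun w : E2 => ‖g w‖ ^ 2) := by
  refine Integrable.mono' ((g.integrable (μ := volume)).norm.const_mul
    ((SchwartzMap.seminorm ℝ 0 0) g)) ((g.continuous.norm.pow 2).aestronglyMeasurable) ?_
  filter_upwards with w
  rw [Real.norm_eq_abs, _root_.abs_of_nonneg (by positivity), pow_two]
  exact mul_le_mul_of_nonneg_right (g.norm_le_seminorm ℝ w) (norm_nonneg _)

lemma ft2_normsq_integrable (f : SchwartzMap (ℝ × ℝ) ℂ) :
    Integrable (fun ξ : ℝ × ℝ => ‖ft2 (⇑f) ξ‖ ^ 2) := by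
  have h1 : (fun ξ : ℝ × ℝ => ‖ft2 (⇑f) ξ‖ ^ 2) =
      (fun w : E2 => ‖(ftS f) w‖ ^ 2) ∘ ⇑mE.symm := by
    funext ξ
    simp only [Function.comp_apply, ft2_eq' f ξ]
    rfl
  rw [h1]
  rw [(MeasurePreserving.symm _ mE_mp).integrable_comp_emb mE.symm.measurableEmbedding]
  exact normsq_integrable_E2 (ftS f)

lemma aniso_modS (σ : ℝ) (f : SchwartzMap (ℝ × ℝ) ℂ) (η : ℝ) :
    anisoSobolevNorm 0 (-σ) ⇑(modS η f) =
      (∫ ξ : ℝ × ℝ, ‖ft2 (⇑f) ξ‖ ^ 2 * (1 + |ξ.2 + η| ^ 2) ^ (-σ / 2)) ^ (1 / 2 : ℝ) := by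
  unfold anisoSobolevNorm
  congr 1
  set K : ℝ × ℝ → ℝ := fun ξ => ‖ft2 (⇑f) ξ‖ ^ 2 * (1 + |ξ.2 + η| ^ 2) ^ (-σ / 2) with hK
  have h1 : ∀ ξ : ℝ × ℝ, ‖ft2 (⇑(modS η f)) ξ‖ ^ 2 * (1 + |ξ.1| ^ 2) ^ ((0 : ℝ) / 2) *
      (1 + |ξ.2| ^ 2) ^ (-σ / 2) = K (ξ - ((0 : ℝ), η)) := by
    intro ξ
    rw [hK]
    simp only [Prod.fst_sub, Prod.snd_sub, sub_zero, sub_add_cancel, zero_div, Real.rpow_zero,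
      mul_one]
    rw [ft2_modS]
    have : (ξ.1, ξ.2 - η) = ξ - ((0:ℝ), η) := by
      ext <;> simp
    rw [this]
  rw [integral_congr_ae (Filter.Eventually.of_forall h1),
    integral_sub_right_eq_self K ((0 : ℝ), η)]

open Filter in
lemma aniso_tendsto (σ : ℝ) (hσ : 0 < σ) (f : SchwartzMap (ℝ × ℝ) ℂ) :
    Tendsto (fun n : ℕ => anisoSobolevNorm 0 (-σ) ⇑(modS (n : ℝ) f)) atTop (nhds 0) := by
  have key : Tendsto (fun n : ℕ =>
      ∫ ξ : ℝ × ℝ, ‖ft2 (⇑f) ξ‖ ^ 2 * (1 + |ξ.2 + (n : ℝ)| ^ 2) ^ (-σ / 2)) atTop (nhds 0) := by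
    have h0 : (0 : ℝ) = ∫ _ξ : ℝ × ℝ, (0 : ℝ) := by simp
    rw [h0]
    apply tendsto_integral_of_dominated_convergence (fun ξ => ‖ft2 (⇑f) ξ‖ ^ 2)
    · intro n
      apply Continuous.aestronglyMeasurable
      exact ((ft2_continuous f).norm.pow 2).mul
        ((continuous_const.add (((continuous_snd.add continuous_const).abs).pow 2)).rpow_const
          (fun ξ => Or.inl (show (1 + |ξ.2 + (n : ℝ)| ^ 2 : ℝ) ≠ 0 by positivity)))
    · exact ft2_normsq_integrable f
    · intro n
      filter_upwards with ξ
      rw [Real.norm_eq_abs, _root_.abs_of_nonneg (by positivity)]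
      have hle : (1 + |ξ.2 + (n : ℝ)| ^ 2) ^ (-σ / 2) ≤ 1 :=
        Real.rpow_le_one_of_one_le_of_nonpos (le_add_of_nonneg_right (by positivity)) (by linarith)
      calc ‖ft2 (⇑f) ξ‖ ^ 2 * (1 + |ξ.2 + (n : ℝ)| ^ 2) ^ (-σ / 2)
          ≤ ‖ft2 (⇑f) ξ‖ ^ 2 * 1 := by
            apply mul_le_mul_of_nonneg_left hle (by positivity)
        _ = ‖ft2 (⇑f) ξ‖ ^ 2 := mul_one _
    · filter_upwards with ξ
      have h1 : Tendsto (fun n : ℕ => (1 + |ξ.2 + (n : ℝ)| ^ 2)) atTop atTop := by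
        apply tendsto_atTop_add_const_left
        apply Tendsto.comp (tendsto_pow_atTop (n := 2) (two_ne_zero))
        apply Tendsto.comp tendsto_abs_atTop_atTop
        exact tendsto_atTop_add_const_left _ _ tendsto_natCast_atTop_atTop
      have h2 : Tendsto (fun n : ℕ => (1 + |ξ.2 + (n : ℝ)| ^ 2) ^ (-σ / 2)) atTop (nhds 0) := by
        rw [show (-σ / 2 : ℝ) = -(σ / 2) by ring]
        exact (tendsto_rpow_neg_atTop (by positivity)).comp h1
      have := h2.const_mul (‖ft2 (⇑f) ξ‖ ^ 2)
      simpa using this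
  have := key.rpow_const (p := (1 / 2 : ℝ)) (Or.inr (by norm_num))
  rw [Real.zero_rpow (by norm_num)] at this
  convert this using 2 with n
  exact aniso_modS σ f (n : ℝ)

lemma eLpNorm_modS (η : ℝ) (f : SchwartzMap (ℝ × ℝ) ℂ) :
    eLpNorm (⇑(modS η f)) ⊤ volume = eLpNorm (⇑f) ⊤ volume := by
  apply eLpNorm_congr_norm_ae
  filter_upwards with x
  rw [modS_apply, norm_mul, Complex.norm_exp, charL_re,
    Real.exp_zero, mul_one]

/-- **No reversed smoothing inequality.** If the reversed smoothing inequality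
`|Λ(f₁,f₂,f₃)| ≤ C ‖f₁‖_{H^{(0,-σ)}} ‖f₂‖_{H^{(-σ,0)}} ‖f₃‖_{L^∞}` held,
then `Λ` would vanish identically on Schwartz functions. -/
theorem no_reversed_smoothing_inequality (ζ : ℝ × ℝ × ℝ → ℂ)
    (hζ : ContDiff ℝ (⊤ : ℕ∞) ζ) (hζc : HasCompactSupport ζ)
    (hζs : tsupport ζ ⊆ {p : ℝ × ℝ × ℝ | p.2.2 ≠ 0})
    (C σ : ℝ) (hC : 0 < C) (hσ : 0 < σ)
    (hbound : ∀ f₁ f₂ f₃ : SchwartzMap (ℝ × ℝ) ℂ,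
      ‖trilinearForm ζ ⇑f₁ ⇑f₂ ⇑f₃‖ ≤
        C * anisoSobolevNorm 0 (-σ) ⇑f₁ * anisoSobolevNorm (-σ) 0 ⇑f₂ *
          (eLpNorm (⇑f₃) ⊤ volume).toReal) :
    ∀ f₁ f₂ f₃ : SchwartzMap (ℝ × ℝ) ℂ, trilinearForm ζ ⇑f₁ ⇑f₂ ⇑f₃ = 0 := by
  intro f₁ f₂ f₃
  set N₂ := anisoSobolevNorm (-σ) 0 ⇑f₂ with hN₂
  set L₃ := (eLpNorm (⇑f₃) ⊤ volume).toReal with hL₃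
  have h : ∀ n : ℕ, ‖trilinearForm ζ ⇑f₁ ⇑f₂ ⇑f₃‖ ≤
      C * anisoSobolevNorm 0 (-σ) ⇑(modS (n : ℝ) f₁) * N₂ * L₃ := by
    intro n
    rw [← tri_inv ζ f₁ f₂ f₃ (n : ℝ)]
    have := hbound (modS (n : ℝ) f₁) f₂ (modS (-(n : ℝ)) f₃)
    rwa [eLpNorm_modS] at this
  have hT : Tendsto (fun n : ℕ => C * anisoSobolevNorm 0 (-σ) ⇑(modS (n : ℝ) f₁) * N₂ * L₃)
      atTop (nhds 0) := by
    have := (((aniso_tendsto σ hσ f₁).const_mul C).mul_const N₂).mul_const L₃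
    simpa using this
  have hle : ‖trilinearForm ζ ⇑f₁ ⇑f₂ ⇑f₃‖ ≤ 0 := ge_of_tendsto' hT h
  exact norm_le_zero_iff.mp hle
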